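/- Consider i.i.d. Bernoulli(p) oriented bond percolation on Z² with p > p⃗_c. Given ε > 0 and M > 0, for all sufficiently large N: P( 0 → D_N and |ξ_N({0})| < M ) < ε. -/

import Mathlib

open MeasureTheory ProbabilityTheory Filter Set Topology

noncomputable section

/-! ### The square lattice `ℤ²` and its nearest-neighbour edges -/

/-- Vertices of the square lattice `ℤ²`. -/
abbrev V : Type := ℤ × ℤ

/-- Nearest-neighbour edges of `ℤ²`: a vertex together with a direction
(`true` = the vertical edge going up, `false` = the horizontal edge going right). -/
abbrev Edge : Type := V × Bool

/-- The second endpoint of an edge. -/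
def ept (e : Edge) : V := if e.2 then (e.1.1, e.1.2 + 1) else (e.1.1 + 1, e.1.2)

/-- Nearest-neighbour adjacency on `ℤ²`. -/
def adj (u v : V) : Prop := ∃ e : Edge, (e.1 = u ∧ ept e = v) ∨ (e.1 = v ∧ ept e = u)

/-- The edge joining two adjacent vertices. -/
def edgeOf (u v : V) : Edge :=
  if u.1 + u.2 ≤ v.1 + v.2 then (u, v.2 != u.2) else (v, u.2 != v.2)

/-- The passage time of a path, recorded as a list of vertices. -/
def pathTime (w : Edge → ℝ) : List V → ℝ
  | u :: v :: rest => w (edgeOf u v) + pathTime w (v :: rest)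
  | _ => 0

/-- The list of edges traversed by a path. -/
def pathEdges : List V → List Edge
  | u :: v :: rest => edgeOf u v :: pathEdges (v :: rest)
  | _ => []

/-- The number of edges of a path with passage time at least `y`. -/
def heavyCount (w : Edge → ℝ) (y : ℝ) : List V → ℕ
  | u :: v :: rest => (if y ≤ w (edgeOf u v) then 1 else 0) + heavyCount w y (v :: rest)
  | _ => 0

/-- `γ` is a lattice path from `x` to `y`. -/
def IsPathBetween (γ : List V) (x y : V) : Prop :=
  γ.Chain' adj ∧ γ.head? = some x ∧ γ.getLast? = some y

/-- The point-to-point passage time between lattice points. -/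
def passage (w : Edge → ℝ) (x y : V) : ℝ :=
  sInf (pathTime w '' {γ | IsPathBetween γ x y})

/-- The lattice point `x'` with `x ∈ x' + [0,1)²`. -/
def latt (x : ℝ × ℝ) : V := (⌊x.1⌋, ⌊x.2⌋)

/-- The passage time between points of `ℝ²`. -/
def passageR (w : Edge → ℝ) (x y : ℝ × ℝ) : ℝ := passage w (latt x) (latt y)

/-- `γ` is a geodesic from `x` to `y`. -/
def IsGeodesic (w : Edge → ℝ) (γ : List V) (x y : V) : Prop :=
  IsPathBetween γ x y ∧ pathTime w γ = passage w x y

/-- The canonical embedding of `ℤ²` into `ℝ²`. -/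
def toR2 (v : V) : ℝ × ℝ := ((v.1 : ℝ), (v.2 : ℝ))

/-- Euclidean distance on `ℝ²`. -/
def edist2 (x y : ℝ × ℝ) : ℝ := Real.sqrt ((x.1 - y.1) ^ 2 + (x.2 - y.2) ^ 2)

/-! ### Oriented percolation -/

/-- An oriented (up or right) step. -/
def ostep (u v : V) : Prop := v = (u.1 + 1, u.2) ∨ v = (u.1, u.2 + 1)

/-- There is an oriented path of open edges from `x` to `y` in the configuration `η`. -/
def OConn (η : Edge → Bool) (x y : V) : Prop :=
  ∃ γ : List V, γ.Chain' (fun u v => ostep u v ∧ η (edgeOf u v) = true) ∧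
    γ.head? = some x ∧ γ.getLast? = some y

/-- `x` is joined by oriented open paths to infinitely many vertices. -/
def OConnInfty (η : Edge → Bool) (x : V) : Prop := {y | OConn η x y}.Infinite

/-- An i.i.d. family of Bernoulli(p) edge variables. -/
def IsBernoulliField {Ω : Type} [MeasurableSpace Ω] (P : Measure Ω)
    (η : Edge → Ω → Bool) (p : ℝ) : Prop :=
  IsProbabilityMeasure P ∧ (∀ e, Measurable (η e)) ∧
    iIndepFun η P ∧
    ∀ e : Edge, P {ω | η e ω = true} = ENNReal.ofReal p

/-- The critical probability `p⃗_c` of oriented bond percolation on `ℤ²`. -/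
def pcOriented : ℝ :=
  sInf {p : ℝ | p ≤ 1 ∧ ∀ (Ω : Type) (_ : MeasurableSpace Ω) (P : Measure Ω)
    (η : Edge → Ω → Bool), IsBernoulliField P η p →
      0 < P {ω | OConnInfty (fun e => η e ω) (0, 0)}}

/-- The set `Ñ = {(-k, k) : k ∈ ℕ}`. -/
def tildeN : Set V := {v | v.1 + v.2 = 0 ∧ v.1 ≤ 0}

/-- The diagonal `D_n = {(u,v) : u + v = n}`. -/
def diagD (n : ℤ) : Set V := {v | v.1 + v.2 = n}

/-- The set of points on the diagonal `D_n` reachable from `S` by oriented open paths. -/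
def xi (η : Edge → Bool) (S : Set V) (n : ℤ) : Set V :=
  {v | v.1 + v.2 = n ∧ ∃ s ∈ S, OConn η s v}

/-- The rightmost point of a subset of the diagonal `D_n` (junk value if there is none). -/
def Mpt (A : Set V) (n : ℤ) : V := (sSup (Prod.fst '' A), n - sSup (Prod.fst '' A))

/-- Evaluation of a linear functional at a lattice point. -/
def fOf (f : (ℝ × ℝ) →ₗ[ℝ] ℝ) (v : V) : ℝ := f (toR2 v)

/-- `f_n(S)`: the value of `f` at the rightmost point of `ξ_n(S)`. -/
def fn (f : (ℝ × ℝ) →ₗ[ℝ] ℝ) (η : Edge → Bool) (S : Set V) (n : ℤ) : ℝ :=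
  fOf f (Mpt (xi η S n) n)

/-- The set `E_m = {(k, -k) : 1 ≤ k ≤ m}`. -/
def Em (m : ℕ) : Set V := {v | v.1 + v.2 = 0 ∧ 1 ≤ v.1 ∧ v.1 ≤ (m : ℤ)}

/-! ### First-passage percolation -/

/-- `(P, τ)` is an i.i.d. first-passage percolation model with edge-weight distribution `μ`. -/
def IsFPP {Ω : Type} [MeasurableSpace Ω] (P : Measure Ω) (τ : Edge → Ω → ℝ)
    (μ : Measure ℝ) : Prop :=
  IsProbabilityMeasure P ∧ (∀ e, Measurable (τ e)) ∧
    iIndepFun τ P ∧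
    ∀ e : Edge, P.map (τ e) = μ

/-- `μ ∈ M_p`: a probability measure with support in `[1,∞)` and an atom of mass `p` at `1`. -/
def MemMp (μ : Measure ℝ) (p : ℝ) : Prop :=
  IsProbabilityMeasure μ ∧ μ (Set.Iio 1) = 0 ∧ μ {1} = ENNReal.ofReal p

open Classical in
/-- The embedded oriented percolation configuration: an edge is open iff its weight is `1`. -/
def etaOf (w : Edge → ℝ) : Edge → Bool := fun e => if w e = 1 then true else false

/-- `g` is the time constant of the model: `g(x) = lim (1/n) E τ(0, nx)`. -/
def IsTimeConstant {Ω : Type} [MeasurableSpace Ω] (P : Measure Ω)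
    (τ : Edge → Ω → ℝ) (g : ℝ × ℝ → ℝ) : Prop :=
  ∀ x : ℝ × ℝ,
    Tendsto (fun n : ℕ => (∫ ω, passageR (fun e => τ e ω) (0, 0) (n • x) ∂P) / n)
      atTop (𝓝 (g x))

/-- The limit shape `B_μ`: the closed unit ball of the time constant `g`. -/
def shape (g : ℝ × ℝ → ℝ) : Set (ℝ × ℝ) := {x | g x ≤ 1}

/-- `α` is the asymptotic speed of the embedded oriented percolation: the mean of the
x-coordinate of the rightmost point of `ξ_n(Ñ)`, divided by `n`, converges to
`1/2 + α/√2`. -/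
def IsOrientedSpeed {Ω : Type} [MeasurableSpace Ω] (P : Measure Ω)
    (τ : Edge → Ω → ℝ) (α : ℝ) : Prop :=
  Tendsto (fun n : ℕ =>
      (∫ ω, ((Mpt (xi (etaOf (fun e => τ e ω)) tildeN n) n).1 : ℝ) ∂P) / n)
    atTop (𝓝 (2⁻¹ + α / Real.sqrt 2))

/-- The point `N_p = (1/2 + α_p/√2, 1/2 - α_p/√2)`. -/
def NpPoint (α : ℝ) : ℝ × ℝ := (2⁻¹ + α / Real.sqrt 2, 2⁻¹ - α / Real.sqrt 2)

/-- The point `M_p = (1/2 - α_p/√2, 1/2 + α_p/√2)`. -/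
def MpPoint (α : ℝ) : ℝ × ℝ := (2⁻¹ - α / Real.sqrt 2, 2⁻¹ + α / Real.sqrt 2)

/-- `θ_p` is the unique angle in `[0, π/4]` such that the segment from `0` to `N_p`
makes angle `θ_p` with the x-axis. -/
def IsThetaP (θp α : ℝ) : Prop :=
  θp ∈ Set.Icc 0 (Real.pi / 4) ∧
    (NpPoint α).2 * Real.cos θp = (NpPoint α).1 * Real.sin θp

/-- The unit vector `w_θ = (cos θ, sin θ)`. -/
def wvec (θ : ℝ) : ℝ × ℝ := (Real.cos θ, Real.sin θ)

/-- The point of `∂B_μ` in the direction `θ`. -/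
def vpt (g : ℝ × ℝ → ℝ) (θ : ℝ) : ℝ × ℝ := (g (wvec θ))⁻¹ • wvec θ

/-- The set of sites of `ℤ²` lying on some geodesic from `0` to `x ∈ ℝ²`. -/
def geodesicSites (w : Edge → ℝ) (x : ℝ × ℝ) : Set V :=
  {v | ∃ γ : List V, IsGeodesic w γ (latt (0, 0)) (latt x) ∧ v ∈ γ}

/-- The fluctuation exponent `χ_θ`. -/
def chiExp {Ω : Type} [MeasurableSpace Ω] (P : Measure Ω) (τ : Edge → Ω → ℝ) (θ : ℝ) : ℝ :=
  sSup {γ : ℝ | 0 ≤ γ ∧ ∃ C > (0 : ℝ), ∀ n : ℕ, 1 ≤ n →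
    C * (n : ℝ) ^ (2 * γ) ≤
      variance (fun ω => passageR (fun e => τ e ω) (0, 0) (n • wvec θ)) P}

/-- The wandering exponent `ξ_θ`. -/
def xiExp {Ω : Type} [MeasurableSpace Ω] (P : Measure Ω) (τ : Edge → Ω → ℝ) (θ : ℝ) : ℝ :=
  sInf {γ : ℝ | 0 < γ ∧ ∃ C > (0 : ℝ), ∀ᶠ n : ℕ in atTop,
    C ≤ (P {ω | ∀ v ∈ geodesicSites (fun e => τ e ω) ((n : ℝ) • wvec θ),
      |(v.2 : ℝ) * Real.cos θ - (v.1 : ℝ) * Real.sin θ| ≤ (n : ℝ) ^ γ}).toReal}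

/-- `θ` is a direction of curvature of the limit shape. -/
def DirOfCurvature (g : ℝ × ℝ → ℝ) (θ : ℝ) : Prop :=
  ∃ (c : ℝ × ℝ) (r : ℝ), 0 < r ∧ (∀ z, g z ≤ 1 → edist2 c z ≤ r) ∧
    edist2 c (vpt g θ) = r

/-! ### The bypass construction -/

/-- The block of vertices whose edges are required to be open in a `(C_a)`-configuration. -/
def CaBlock (a : ℕ) (z : V) : Set V :=
  {w | z.1 + 2 ≤ w.1 ∧ z.2 - 1 ≤ w.2 ∧ |w.1 - (z.1 + 2)| + |w.2 - (z.2 - 1)| ≤ (a : ℤ) - 1}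

/-- The `(C_a)`-configuration around the vertex `z`. -/
def CaConfig (a : ℕ) (η : Edge → Bool) (z : V) : Prop :=
  η ((z.1, z.2), false) = true ∧
  η ((z.1 + 1, z.2 - 1), true) = true ∧
  η ((z.1 + 1, z.2 - 1), false) = true ∧
  η ((z.1, z.2), true) = false ∧
  η ((z.1 + 1, z.2), false) = false ∧
  η ((z.1 + 1, z.2), true) = false ∧
  (∀ w : V, w.1 + w.2 = z.1 + z.2 → z.2 + 1 ≤ w.2 → w.2 ≤ z.2 + (a : ℤ) - 2 →
    η (w, false) = false ∧ η (w, true) = false) ∧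
  (∀ e : Edge, e.1 ∈ CaBlock a z → ept e ∈ CaBlock a z → η e = true)

/-- The bypass shape `S^a = {(u,v) : u ≥ 2, v ≥ -1, ‖(u,v) - (2,-1)‖₁ = a - 1}`. -/
def Sa (a : ℕ) : Set V :=
  {w | 2 ≤ w.1 ∧ -1 ≤ w.2 ∧ |w.1 - 2| + |w.2 + 1| = (a : ℤ) - 1}

/-- The iterated bypass construction: `(bypass a η S k).1` is the process `ξ^k` and
`(bypass a η S k).2` is the stopping time `τ_k` (with `τ_0 = 0`). -/
def bypass (a : ℕ) (η : Edge → Bool) (S : Set V) : ℕ → (ℤ → Set V) × ℕ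
  | 0 => (fun n => xi η S n, 0)
  | k + 1 =>
      let ξk := (bypass a η S k).1
      let τk := (bypass a η S k).2
      let τ' := sInf {n : ℕ | τk + 1 ≤ n ∧
        CaConfig a η (Mpt (ξk ((a : ℤ) * n - a)) ((a : ℤ) * n - a))}
      (fun n => if n < (a : ℤ) * τ' then ξk n
        else xi η (ξk ((a : ℤ) * τ') ∪
          ((Mpt (ξk ((a : ℤ) * τ' - a)) ((a : ℤ) * τ' - a) + ·) '' Sa a)) n,
       τ')

/-- `K_n`: the number of bypasses taken up to time `n`. -/
def Kn (a : ℕ) (η : Edge → Bool) (S : Set V) (n : ℕ) : ℕ :=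
  Set.ncard {k : ℕ | 1 ≤ k ∧ (bypass a η S k).2 ≤ n}

/-- `f_n^k(S)`: the value of `f` at the rightmost point of `ξ_n^k`. -/
def fnk (f : (ℝ × ℝ) →ₗ[ℝ] ℝ) (a : ℕ) (η : Edge → Bool) (S : Set V) (k : ℕ) (n : ℤ) : ℝ :=
  fOf f (Mpt ((bypass a η S k).1 n) n)

/-- `b(r)`: the minimal passage time from the origin to the line `{f = r}`. -/
def breach (w : Edge → ℝ) (f : (ℝ × ℝ) →ₗ[ℝ] ℝ) (r : ℝ) : ℝ :=
  sInf (passageR w (0, 0) '' {z : ℝ × ℝ | f z = r})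

/-- The graph of infection `Γ(0)`: the union of the edge sets of all geodesics from `0`. -/
def infGraph (w : Edge → ℝ) : Set Edge :=
  {e | ∃ (x : V) (γ : List V), IsGeodesic w γ (0, 0) x ∧ e ∈ pathEdges γ}

/-- Connectivity in the graph with edge set `E`, avoiding the vertex set `F`. -/
def ConnInGraph (E : Set Edge) (F : Set V) (u v : V) : Prop :=
  ∃ γ : List V, γ.Chain' (fun a b => adj a b ∧ edgeOf a b ∈ E) ∧
    (∀ z ∈ γ, z ∉ F) ∧ γ.head? = some u ∧ γ.getLast? = some v

/-- The vertex set of the graph with edge set `E`. -/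
def graphVerts (E : Set Edge) : Set V := {v | ∃ e ∈ E, e.1 = v ∨ ept e = v}

/-- The graph with edge set `E` has at least `m` ends. -/
def HasAtLeastEnds (E : Set Edge) (m : ℕ) : Prop :=
  ∃ (F : Finset V) (reps : Fin m → V),
    (∀ i, reps i ∈ graphVerts E ∧ reps i ∉ F) ∧
    (∀ i j, i ≠ j → ¬ ConnInGraph E (↑F) (reps i) (reps j)) ∧
    ∀ i, {v | ConnInGraph E (↑F) (reps i) v}.Infinite

/-- Lattice points within (Euclidean) distance 2 of `M ∂K`. -/
def Btilde (K : Set (ℝ × ℝ)) (M : ℝ) : Set V :=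
  {v | ∃ z ∈ frontier K, edist2 (toR2 v) (M • z) ≤ 2}

end

namespace St15
open MeasureTheory ProbabilityTheory Filter Set

def lvl (v : V) : ℤ := v.1 + v.2

def pstep (η : Edge → Bool) (u v : V) : Prop := ostep u v ∧ η (edgeOf u v) = true

def reach (η : Edge → Bool) (v : V) : Prop := Relation.ReflTransGen (pstep η) ((0, 0) : V) v

lemma ostep_lvl {u v : V} (h : ostep u v) : lvl v = lvl u + 1 := by
  rcases h with h | h <;> subst h <;> simp [lvl] <;> ring

lemma edgeOf_ostep {u v : V} (h : ostep u v) : edgeOf u v = (u, v.2 != u.2) := by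
  have h2 : u.1 + u.2 ≤ v.1 + v.2 := by
    rcases h with h | h <;> subst h <;> simp <;> omega
  simp [edgeOf, h2]

lemma edgeOf_right (u : V) : edgeOf u (u.1 + 1, u.2) = (u, false) := by
  rw [edgeOf_ostep (Or.inl rfl)]; simp

lemma edgeOf_up (u : V) : edgeOf u (u.1, u.2 + 1) = (u, true) := by
  rw [edgeOf_ostep (Or.inr rfl)]
  simp only [Prod.mk.injEq, true_and]
  rw [bne_iff_ne]; omega

lemma oconn_iff (η : Edge → Bool) (x y : V) :
    OConn η x y ↔ Relation.ReflTransGen (pstep η) x y := by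
  constructor
  · rintro ⟨γ, hc, hh, hl⟩
    rcases γ with _ | ⟨a, l⟩
    · simp at hh
    · have ha : a = x := by simpa using hh
      have hc' : List.Chain (pstep η) a l := hc
      rw [List.getLast?_eq_getLast (List.cons_ne_nil _ _)] at hl
      exact ha ▸ List.relationReflTransGen_of_exists_isChain_cons l hc' (Option.some_injective _ hl)
  · intro h
    obtain ⟨l, hc, hl⟩ := List.exists_isChain_cons_of_relationReflTransGen h
    exact ⟨x :: l, hc, rfl, by rw [List.getLast?_eq_getLast (List.cons_ne_nil _ _), hl]⟩

lemma reach_nonneg {η : Edge → Bool} {v : V} (h : reach η v) : 0 ≤ v.1 ∧ 0 ≤ v.2 := by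
  induction h with
  | refl => simp
  | @tail b c hab hbc ih =>
    obtain ⟨h1, h2⟩ := ih
    rcases hbc.1 with h | h <;> subst h <;> constructor <;> simp <;> omega

lemma exists_block {η : Edge → Bool} {v : V} (h : reach η v) {N : ℤ} (hN0 : 0 ≤ N)
    (hN : N < lvl v) : ∃ u w, lvl u = N ∧ reach η u ∧ pstep η u w := by
  induction h with
  | refl => exfalso; simp [lvl] at hN; omega
  | @tail b c hab hbc ih =>
    by_cases hb : N < lvl b
    · exact ih hb
    · have h1 : lvl c = lvl b + 1 := ostep_lvl hbc.1
      have h2 : lvl b = N := by omega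
      exact ⟨b, c, h2, hab, hbc⟩

lemma mem_xi {η : Edge → Bool} {v : V} {N : ℤ} :
    v ∈ xi η {((0, 0) : V)} N ↔ lvl v = N ∧ reach η v := by
  simp [xi, lvl, reach, oconn_iff]

lemma chain_lvl {η : Edge → Bool} {a : V} {l : List V} (h : List.Chain (pstep η) a l) :
    lvl (List.getLast (a :: l) (List.cons_ne_nil _ _)) = lvl a + l.length := by
  induction l generalizing a with
  | nil => simp
  | cons b l ih =>
    obtain ⟨hab, hc⟩ := List.chain_cons.mp h
    have h1 := ih hc
    have h2 := ostep_lvl hab.1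
    rw [List.getLast_cons (List.cons_ne_nil _ _), h1, h2]
    simp only [List.length_cons]
    push_cast
    ring

lemma xi_finite (η : Edge → Bool) (N : ℤ) : (xi η {((0, 0) : V)} N).Finite := by
  apply Set.Finite.subset ((Set.finite_Icc (0 : ℤ) N).image (fun i => ((i, N - i) : V)))
  rintro ⟨a, b⟩ hv
  rw [mem_xi] at hv
  obtain ⟨h1, h2⟩ := reach_nonneg hv.2
  have h3 : a + b = N := hv.1
  simp only [Set.mem_image, Set.mem_Icc, Prod.mk.injEq]
  exact ⟨a, ⟨by simpa using h1, by simp at h1 h2 ⊢; omega⟩, rfl, by simp at h1 h2 ⊢; omega⟩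

end St15

namespace St15
open MeasureTheory ProbabilityTheory Filter Set

variable {Ω : Type} [MeasurableSpace Ω]

def mLow (η : Edge → Ω → Bool) (N : ℤ) : MeasurableSpace Ω :=
  ⨆ e ∈ {e : Edge | lvl e.1 < N}, MeasurableSpace.comap (η e) inferInstance

def mHigh (η : Edge → Ω → Bool) (N : ℤ) : MeasurableSpace Ω :=
  ⨆ e ∈ {e : Edge | lvl e.1 < N}ᶜ, MeasurableSpace.comap (η e) inferInstance

lemma measurableSet_eta (η : Edge → Ω → Bool) (e : Edge) (b : Bool) :
    MeasurableSet[MeasurableSpace.comap (η e) inferInstance] ((η e) ⁻¹' {b}) :=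
  ⟨{b}, MeasurableSet.singleton b, rfl⟩

lemma mLow_le (η : Edge → Ω → Bool) (hη : ∀ e, Measurable (η e)) (N : ℤ) :
    mLow η N ≤ ‹MeasurableSpace Ω› :=
  iSup₂_le fun e _ => (hη e).comap_le

lemma mHigh_le (η : Edge → Ω → Bool) (hη : ∀ e, Measurable (η e)) (N : ℤ) :
    mHigh η N ≤ ‹MeasurableSpace Ω› :=
  iSup₂_le fun e _ => (hη e).comap_le

lemma chain_event_meas (η : Edge → Ω → Bool) {N : ℤ} (l : List V) (a : V)
    (hbound : lvl a + l.length ≤ N) :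
    MeasurableSet[mLow η N] {ω | List.Chain (pstep (fun e => η e ω)) a l} := by
  induction l generalizing a with
  | nil =>
    have h : {ω : Ω | List.Chain (pstep (fun e => η e ω)) a List.nil} = Set.univ := by
      ext ω; simp [List.Chain]
    rw [h]; exact @MeasurableSet.univ Ω (mLow η N)
  | cons b l ih =>
    by_cases hstep : ostep a b
    · have hset : {ω : Ω | List.Chain (pstep (fun e => η e ω)) a (b :: l)}
          = (η (edgeOf a b)) ⁻¹' {true} ∩ {ω | List.Chain (pstep (fun e => η e ω)) b l} := by
        ext ω; simp [List.Chain, List.chain_cons, pstep, hstep]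
      rw [hset]
      have hb := ostep_lvl hstep
      refine MeasurableSet.inter ?_ (ih b ?_)
      · have he : edgeOf a b ∈ {e : Edge | lvl e.1 < N} := by
          rw [edgeOf_ostep hstep]
          simp only [Set.mem_setOf_eq]
          simp only [List.length_cons] at hbound; push_cast at hbound
          omega
        exact le_iSup₂ (f := fun (e : Edge) (_ : e ∈ {e : Edge | lvl e.1 < N}) =>
            MeasurableSpace.comap (η e) inferInstance) _ he _ (measurableSet_eta η _ true)
      · simp only [List.length_cons] at hbound; push_cast at hbound ⊢; omega
    · have hset : {ω : Ω | List.Chain (pstep (fun e => η e ω)) a (b :: l)} = ∅ := by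
        ext ω; simp [List.Chain, List.chain_cons, pstep, hstep]
      rw [hset]; exact @MeasurableSet.empty Ω (mLow η N)

lemma reach_event_eq (η : Edge → Ω → Bool) {N : ℤ} (v : V) (hv : lvl v = N) :
    {ω : Ω | reach (fun e => η e ω) v} =
      ⋃ l : List V,
        if List.getLast (((0, 0) : V) :: l) (List.cons_ne_nil _ _) = v ∧ l.length = N.toNat
        then {ω | List.Chain (pstep (fun e => η e ω)) ((0, 0) : V) l} else ∅ := by
  ext ω
  simp only [Set.mem_iUnion, Set.mem_setOf_eq]
  constructor
  · intro h
    obtain ⟨l, hc, hl⟩ := List.exists_isChain_cons_of_relationReflTransGen h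
    have hlvl := chain_lvl hc
    rw [hl, hv] at hlvl
    have h0 : lvl ((0, 0) : V) = 0 := by simp [lvl]
    have hlen : l.length = N.toNat := by omega
    exact ⟨l, by rw [if_pos ⟨hl, hlen⟩]; exact hc⟩
  · rintro ⟨l, hl⟩
    by_cases hcond : List.getLast (((0, 0) : V) :: l) (List.cons_ne_nil _ _) = v ∧
        l.length = N.toNat
    · rw [if_pos hcond] at hl
      exact List.relationReflTransGen_of_exists_isChain_cons l hl hcond.1
    · rw [if_neg hcond] at hl; exact hl.elim

lemma reach_event_meas (η : Edge → Ω → Bool) {N : ℤ} (hN : 0 ≤ N) (v : V) (hv : lvl v = N) :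
    MeasurableSet[mLow η N] {ω | reach (fun e => η e ω) v} := by
  rw [reach_event_eq η v hv]
  refine MeasurableSet.iUnion fun l => ?_
  split_ifs with h
  · apply chain_event_meas η l ((0, 0) : V)
    have h0 : lvl ((0, 0) : V) = 0 := by simp [lvl]
    rw [h0, h.2]
    omega
  · exact @MeasurableSet.empty Ω (mLow η N)

lemma xi_mem_event_meas (η : Edge → Ω → Bool) {N : ℤ} (hN : 0 ≤ N) (v : V) :
    MeasurableSet[mLow η N] {ω | v ∈ xi (fun e => η e ω) {((0, 0) : V)} N} := by
  by_cases hv : lvl v = N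
  · have h : {ω : Ω | v ∈ xi (fun e => η e ω) {((0, 0) : V)} N}
        = {ω | reach (fun e => η e ω) v} := by
      ext ω
      exact ⟨fun hx => (mem_xi.mp hx).2, fun hr => mem_xi.mpr ⟨hv, hr⟩⟩
    rw [h]; exact reach_event_meas η hN v hv
  · have h : {ω : Ω | v ∈ xi (fun e => η e ω) {((0, 0) : V)} N} = ∅ := by
      ext ω
      exact ⟨fun hx => (hv (mem_xi.mp hx).1).elim, fun hx => hx.elim⟩
    rw [h]; exact @MeasurableSet.empty Ω (mLow η N)

def CSet (η : Edge → Ω → Bool) (N : ℤ) (S : Finset V) : Set Ω :=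
  {ω | xi (fun e => η e ω) {((0, 0) : V)} N = ↑S}

lemma CSet_meas (η : Edge → Ω → Bool) {N : ℤ} (hN : 0 ≤ N) (S : Finset V) :
    MeasurableSet[mLow η N] (CSet η N S) := by
  have h : CSet η N S = ⋂ v : V,
      (if v ∈ S then {ω | v ∈ xi (fun e => η e ω) {((0, 0) : V)} N}
       else {ω | v ∈ xi (fun e => η e ω) {((0, 0) : V)} N}ᶜ) := by
    ext ω
    simp only [CSet, Set.mem_setOf_eq, Set.mem_iInter]
    constructor
    · intro h v
      by_cases hvS : v ∈ S
      · rw [if_pos hvS]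
        show v ∈ xi (fun e => η e ω) {((0, 0) : V)} N
        rw [h]; exact_mod_cast hvS
      · rw [if_neg hvS]
        simp only [Set.mem_compl_iff, Set.mem_setOf_eq]
        rw [h]; exact_mod_cast hvS
    · intro h
      ext v
      have hv := h v
      by_cases hvS : v ∈ S
      · rw [if_pos hvS] at hv
        exact iff_of_true hv (by exact_mod_cast hvS)
      · rw [if_neg hvS] at hv
        simp only [Set.mem_compl_iff, Set.mem_setOf_eq] at hv
        exact iff_of_false hv (by exact_mod_cast hvS)
  rw [h]
  refine MeasurableSet.iInter fun v => ?_
  split_ifs with hv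
  · exact xi_mem_event_meas η hN v
  · exact (xi_mem_event_meas η hN v).compl

def DSet (η : Edge → Ω → Bool) (S : Finset V) : Set Ω :=
  ⋂ e ∈ S ×ˢ (Finset.univ : Finset Bool), (η e) ⁻¹' {false}

lemma DSet_memHigh (η : Edge → Ω → Bool) {N : ℤ} (S : Finset V) (hS : ∀ s ∈ S, lvl s = N) :
    MeasurableSet[mHigh η N] (DSet η S) := by
  refine MeasurableSet.iInter fun e => MeasurableSet.iInter fun he => ?_
  have he1 : e.1 ∈ S := (Finset.mem_product.mp he).1
  have he2 : e ∈ {e : Edge | lvl e.1 < N}ᶜ := by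
    simp only [Set.mem_compl_iff, Set.mem_setOf_eq, not_lt]
    rw [hS e.1 he1]
  exact le_iSup₂ (f := fun (e : Edge) (_ : e ∈ {e : Edge | lvl e.1 < N}ᶜ) =>
      MeasurableSpace.comap (η e) inferInstance) _ he2 _ (measurableSet_eta η _ false)

end St15

namespace St15
open MeasureTheory ProbabilityTheory Filter Set

variable {Ω : Type} [MeasurableSpace Ω]

def AE (η : Edge → Ω → Bool) (N : ℤ) : Set Ω :=
  {ω | ∃ v : V, lvl v = N ∧ reach (fun e => η e ω) v}

lemma AE_meas (η : Edge → Ω → Bool) (hη : ∀ e, Measurable (η e)) {N : ℤ} (hN : 0 ≤ N) :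
    MeasurableSet (AE η N) := by
  have h : AE η N = ⋃ v : V, (if lvl v = N then {ω | reach (fun e => η e ω) v} else ∅) := by
    ext ω
    simp only [AE, Set.mem_iUnion, Set.mem_setOf_eq]
    constructor
    · rintro ⟨v, hv, hr⟩; exact ⟨v, by rw [if_pos hv]; exact hr⟩
    · rintro ⟨v, hv⟩
      by_cases h : lvl v = N
      · rw [if_pos h] at hv; exact ⟨v, h, hv⟩
      · rw [if_neg h] at hv; exact hv.elim
  rw [h]
  refine MeasurableSet.iUnion fun v => ?_
  split_ifs with hv
  · exact mLow_le η hη N _ (reach_event_meas η hN v hv)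
  · exact MeasurableSet.empty

lemma AE_antitone (η : Edge → Ω → Bool) {N : ℤ} (hN : 0 ≤ N) : AE η (N + 1) ⊆ AE η N := by
  rintro ω ⟨v, hv, hr⟩
  obtain ⟨u, w, hu, hru, -⟩ := exists_block hr hN (by omega)
  exact ⟨u, hu, hru⟩

lemma indep_low_high {P : Measure Ω} {η : Edge → Ω → Bool} {p : ℝ}
    (hfield : IsBernoulliField P η p) (N : ℤ) :
    Indep (mLow η N) (mHigh η N) P :=
  indep_iSup_of_disjoint (fun e => (hfield.2.1 e).comap_le) hfield.2.2.1 disjoint_compl_right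

lemma eta_false_prob {P : Measure Ω} {η : Edge → Ω → Bool} {p : ℝ}
    (hfield : IsBernoulliField P η p) (hp0 : 0 ≤ p) (e : Edge) :
    P ((η e) ⁻¹' {false}) = ENNReal.ofReal (1 - p) := by
  have := hfield.1
  have htrue : P ((η e) ⁻¹' {true}) = ENNReal.ofReal p := hfield.2.2.2 e
  have hc : (η e) ⁻¹' {false} = ((η e) ⁻¹' {true})ᶜ := by
    ext ω; simp
  rw [hc, prob_compl_eq_one_sub ((hfield.2.1 e) (MeasurableSet.singleton true)), htrue,
    ENNReal.ofReal_sub 1 hp0, ENNReal.ofReal_one]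

lemma DSet_prob {P : Measure Ω} {η : Edge → Ω → Bool} {p : ℝ}
    (hfield : IsBernoulliField P η p) (hp0 : 0 ≤ p) (hp1 : p ≤ 1) (S : Finset V) :
    P (DSet η S) = ENNReal.ofReal ((1 - p) ^ (2 * S.card)) := by
  have h := hfield.2.2.1.meas_biInter (S := S ×ˢ (Finset.univ : Finset Bool))
    (s := fun e => (η e) ⁻¹' {false}) (fun e _ => measurableSet_eta η e false)
  rw [DSet, h, Finset.prod_congr rfl (fun e _ => eta_false_prob hfield hp0 e),
    Finset.prod_const, ← ENNReal.ofReal_pow (by linarith : (0:ℝ) ≤ 1 - p)]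
  congr 1
  rw [Finset.card_product]
  simp [mul_comm]

lemma CD_subset (η : Edge → Ω → Bool) {N : ℤ} (hN : 0 ≤ N) (S : Finset V) (hne : S.Nonempty) :
    CSet η N S ∩ DSet η S ⊆ AE η N \ AE η (N + 1) := by
  rintro ω ⟨hC, hD⟩
  have hxi : xi (fun e => η e ω) {((0, 0) : V)} N = ↑S := hC
  have hDall : ∀ e ∈ S ×ˢ (Finset.univ : Finset Bool), η e ω = false := by
    intro e he
    have := Set.mem_iInter₂.mp hD e he
    simpa using this
  constructor
  · obtain ⟨s, hs⟩ := hne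
    have hsxi : s ∈ xi (fun e => η e ω) {((0, 0) : V)} N := by
      rw [hxi]; exact_mod_cast hs
    obtain ⟨h1, h2⟩ := mem_xi.mp hsxi
    exact ⟨s, h1, h2⟩
  · rintro ⟨v, hv, hr⟩
    obtain ⟨u, w, hu, hru, hsw⟩ := exists_block hr hN (by omega)
    have huS : u ∈ S := by
      have hx : u ∈ xi (fun e => η e ω) {((0, 0) : V)} N := mem_xi.mpr ⟨hu, hru⟩
      rw [hxi] at hx; exact_mod_cast hx
    have hopen := hsw.2
    have hfalse : ∀ b : Bool, η (u, b) ω = false := fun b =>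
      hDall (u, b) (Finset.mem_product.mpr ⟨huS, Finset.mem_univ _⟩)
    rcases hsw.1 with h | h
    · rw [h, edgeOf_right] at hopen
      have hopen' : η (u, false) ω = true := hopen
      rw [hfalse false] at hopen'
      exact Bool.noConfusion hopen'
    · rw [h, edgeOf_up] at hopen
      have hopen' : η (u, true) ω = true := hopen
      rw [hfalse true] at hopen'
      exact Bool.noConfusion hopen'

lemma B_eq (η : Edge → Ω → Bool) (M : ℕ) {N : ℤ} (hN : 0 ≤ N) :
    {ω : Ω | (∃ v ∈ diagD N, OConn (fun e => η e ω) (0, 0) v) ∧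
        (xi (fun e => η e ω) {(0, 0)} N).ncard < M}
      = ⋃ S ∈ {S : Finset V | (∀ s ∈ S, lvl s = N) ∧ S.Nonempty ∧ S.card < M},
          CSet η N S := by
  ext ω
  simp only [Set.mem_iUnion, Set.mem_setOf_eq]
  constructor
  · rintro ⟨⟨v, hv, hvc⟩, hcard⟩
    have hfin := xi_finite (fun e => η e ω) N
    refine ⟨hfin.toFinset, ⟨?_, ?_, ?_⟩, ?_⟩
    · intro s hs
      rw [Set.Finite.mem_toFinset] at hs
      exact (mem_xi.mp hs).1
    · rw [Set.Finite.toFinset_nonempty]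
      exact ⟨v, hv, ⟨(0, 0), rfl, hvc⟩⟩
    · rwa [Set.ncard_eq_toFinset_card _ hfin] at hcard
    · show xi (fun e => η e ω) {((0, 0) : V)} N = _
      rw [Set.Finite.coe_toFinset]
  · rintro ⟨S, ⟨hlvl, ⟨s, hsS⟩, hcard⟩, hxi⟩
    have hxi' : xi (fun e => η e ω) {((0, 0) : V)} N = ↑S := hxi
    constructor
    · have hsxi : s ∈ xi (fun e => η e ω) {((0, 0) : V)} N := by
        rw [hxi']; exact_mod_cast hsS
      obtain ⟨h1, h2⟩ := mem_xi.mp hsxi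
      exact ⟨s, h1, (oconn_iff _ _ _).mpr h2⟩
    · show (xi (fun e => η e ω) {((0, 0) : V)} N).ncard < M
      rw [hxi', Set.ncard_coe_finset]
      exact hcard

lemma key {P : Measure Ω} {η : Edge → Ω → Bool} {p : ℝ}
    (hfield : IsBernoulliField P η p) (hp0 : 0 ≤ p) (hp1 : p ≤ 1) (M : ℕ) {N : ℤ} (hN : 0 ≤ N) :
    ENNReal.ofReal ((1 - p) ^ (2 * M)) *
      P {ω | (∃ v ∈ diagD N, OConn (fun e => η e ω) (0, 0) v) ∧
        (xi (fun e => η e ω) {(0, 0)} N).ncard < M}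
    ≤ P (AE η N \ AE η (N + 1)) := by
  classical
  set 𝒮 : Set (Finset V) := {S : Finset V | (∀ s ∈ S, lvl s = N) ∧ S.Nonempty ∧ S.card < M}
    with h𝒮
  have hcnt : 𝒮.Countable := Set.to_countable _
  have hmeasC : ∀ S ∈ 𝒮, MeasurableSet (CSet η N S) :=
    fun S _ => mLow_le η hfield.2.1 N _ (CSet_meas η hN S)
  have hdisj : 𝒮.PairwiseDisjoint (CSet η N) := by
    intro S hS T hT hne
    refine Set.disjoint_left.mpr fun ω hS' hT' => hne ?_
    exact Finset.coe_injective ((Eq.symm hS').trans hT')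
  rw [B_eq η M hN, measure_biUnion hcnt hdisj hmeasC, ← ENNReal.tsum_mul_left]
  have hle : ∀ S : 𝒮, ENNReal.ofReal ((1 - p) ^ (2 * M)) * P (CSet η N (S : Finset V))
      ≤ P (CSet η N (S : Finset V) ∩ DSet η (S : Finset V)) := by
    rintro ⟨S, hS⟩
    have heq : P (CSet η N S ∩ DSet η S) = P (CSet η N S) * P (DSet η S) :=
      (Indep_iff _ _ _).mp (indep_low_high hfield N) _ _ (CSet_meas η hN S)
        (DSet_memHigh η S hS.1)
    rw [heq, mul_comm (P (CSet η N S)) (P (DSet η S))]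
    refine mul_le_mul_left ?_ _
    rw [DSet_prob hfield hp0 hp1 S]
    apply ENNReal.ofReal_le_ofReal
    exact pow_le_pow_of_le_one (by linarith) (by linarith) (by have h := hS.2.2; omega)
  have hdisj' : 𝒮.PairwiseDisjoint (fun S => CSet η N S ∩ DSet η S) := by
    intro S hS T hT hne
    exact ((hdisj hS hT hne).mono Set.inter_subset_left Set.inter_subset_left)
  have hmeas' : ∀ S ∈ 𝒮, MeasurableSet (CSet η N S ∩ DSet η S) := by
    intro S hS
    exact (hmeasC S hS).inter (mHigh_le η hfield.2.1 N _ (DSet_memHigh η S hS.1))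
  calc ∑' (S : 𝒮), ENNReal.ofReal ((1 - p) ^ (2 * M)) * P (CSet η N (S : Finset V))
      ≤ ∑' (S : 𝒮), P (CSet η N (S : Finset V) ∩ DSet η (S : Finset V)) :=
        ENNReal.tsum_le_tsum hle
    _ = P (⋃ S ∈ 𝒮, CSet η N S ∩ DSet η S) := (measure_biUnion hcnt hdisj' hmeas').symm
    _ ≤ P (AE η N \ AE η (N + 1)) := by
        refine measure_mono (Set.iUnion₂_subset fun S hS => ?_)
        exact CD_subset η hN S hS.2.1

end St15

namespace St15
open MeasureTheory ProbabilityTheory Filter Set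

lemma pc_nonneg : 0 ≤ pcOriented := by
  apply Real.sInf_nonneg
  rintro q ⟨hq1, hq⟩
  by_contra hneg
  push_neg at hneg
  have hfield : IsBernoulliField (Measure.dirac () : Measure Unit) (fun _ _ => false) q := by
    refine ⟨by infer_instance, fun e => measurable_const, ?_, ?_⟩
    · rw [iIndepFun_iff]
      intro s f' hf'
      have hcases : ∀ i ∈ s, f' i = ∅ ∨ f' i = Set.univ := by
        intro i hi
        obtain ⟨t, -, ht⟩ := hf' i hi
        by_cases hft : false ∈ t
        · right; rw [← ht]; ext ω; simp [hft]
        · left; rw [← ht]; ext ω; simp [hft]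
      by_cases hall : ∀ i ∈ s, f' i = Set.univ
      · have h2 : (⋂ i ∈ s, f' i) = Set.univ := by
          ext x
          simp only [Set.mem_iInter, Set.mem_univ, iff_true]
          intro i hi
          rw [hall i hi]; trivial
        rw [h2, Finset.prod_congr rfl (fun i hi => by rw [hall i hi])]
        simp
      · push_neg at hall
        obtain ⟨i0, hi0, hne⟩ := hall
        have h0 : f' i0 = ∅ := ((hcases i0 hi0).resolve_right hne)
        have h2 : (⋂ i ∈ s, f' i) = ∅ :=
          Set.eq_empty_of_subset_empty (h0 ▸ Set.biInter_subset_of_mem hi0)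
        rw [h2, measure_empty]
        exact (Finset.prod_eq_zero hi0 (by rw [h0, measure_empty])).symm
    · intro e
      have h : {ω : Unit | (fun _ _ => false) e ω = true} = ∅ := by
        ext ω; simp
      rw [h, measure_empty, Eq.comm, ENNReal.ofReal_eq_zero]
      linarith
  have hpos := hq Unit inferInstance (Measure.dirac ()) (fun _ _ => false) hfield
  have hempty : {ω : Unit | OConnInfty (fun _ => false) (0, 0)} = ∅ := by
    ext ω
    simp only [Set.mem_setOf_eq, Set.mem_empty_iff_false, iff_false]
    intro h
    have hset : {y : V | OConn (fun _ => false) (0, 0) y} = {((0, 0) : V)} := by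
      ext y
      simp only [Set.mem_setOf_eq, Set.mem_singleton_iff]
      rw [oconn_iff]
      constructor
      · intro h
        induction h with
        | refl => rfl
        | tail _ h2 _ => exact absurd h2.2 (by simp)
      · rintro rfl
        exact Relation.ReflTransGen.refl
    rw [OConnInfty, hset] at h
    exact h (Set.finite_singleton _)
  rw [hempty, measure_empty] at hpos
  exact lt_irrefl _ hpos

lemma reach_all {η' : Edge → Bool} (hall : ∀ e, η' e = true) (i j : ℕ) :
    reach η' ((i : ℤ), (j : ℤ)) := by
  have col : ∀ j : ℕ, reach η' ((0 : ℤ), (j : ℤ)) := by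
    intro j
    induction j with
    | zero => exact Relation.ReflTransGen.refl
    | succ j ih =>
      refine Relation.ReflTransGen.tail ih ⟨Or.inr ?_, hall _⟩
      push_cast; rfl
  induction i with
  | zero => exact col j
  | succ i ih =>
    refine Relation.ReflTransGen.tail ih ⟨Or.inl ?_, hall _⟩
    push_cast; rfl

lemma case_one {Ω : Type} [MeasurableSpace Ω] {P : Measure Ω} {η : Edge → Ω → Bool}
    (hfield : IsBernoulliField P η 1) (M N : ℕ) (hMN : M ≤ N + 1) :
    P {ω | (∃ v ∈ diagD (N : ℤ), OConn (fun e => η e ω) (0, 0) v) ∧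
        (xi (fun e => η e ω) {(0, 0)} (N : ℤ)).ncard < M} = 0 := by
  have := hfield.1
  have hnull : ∀ e : Edge, P ((η e) ⁻¹' {false}) = 0 := by
    intro e
    rw [eta_false_prob hfield zero_le_one e]
    simp
  refine measure_mono_null ?_ (measure_iUnion_null fun e : Edge => hnull e)
  intro ω hω
  by_contra hν
  simp only [Set.mem_iUnion, Set.mem_preimage, Set.mem_singleton_iff] at hν
  push_neg at hν
  have hall : ∀ e, η e ω = true := by
    intro e
    cases hb : η e ω
    · exact absurd hb (hν e)
    · rfl
  have hsub : ↑((Finset.range (N + 1)).image (fun i : ℕ => (((i : ℤ), ((N - i : ℕ) : ℤ)) : V)))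
      ⊆ xi (fun e => η e ω) {((0, 0) : V)} (N : ℤ) := by
    intro v hv
    simp only [Finset.coe_image, Finset.coe_range, Set.mem_image, Set.mem_Iio] at hv
    obtain ⟨i, hi, rfl⟩ := hv
    refine mem_xi.mpr ⟨?_, reach_all hall i (N - i)⟩
    show (i : ℤ) + ((N - i : ℕ) : ℤ) = (N : ℤ)
    omega
  have hcard : N + 1 ≤ (xi (fun e => η e ω) {((0, 0) : V)} (N : ℤ)).ncard := by
    have h1 := Set.ncard_le_ncard hsub (xi_finite _ _)
    rw [Set.ncard_coe_finset] at h1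
    have h2 : ((Finset.range (N + 1)).image
        (fun i : ℕ => (((i : ℤ), ((N - i : ℕ) : ℤ)) : V))).card = N + 1 := by
      rw [Finset.card_image_of_injective _ ?_, Finset.card_range]
      intro a b hab
      simp only [Prod.mk.injEq] at hab
      exact_mod_cast hab.1
    omega
  have := hω.2
  omega

end St15

/-- reaching level `N` with few reachable sites is unlikely. -/
theorem stmt15 {Ω : Type} [MeasurableSpace Ω] (P : Measure Ω) (η : Edge → Ω → Bool)
    (p : ℝ) (hfield : IsBernoulliField P η p) (hp : pcOriented < p)
    (ε : ℝ) (hε : 0 < ε) (M : ℕ) (hM : 0 < M) :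
    ∀ᶠ N : ℕ in atTop,
      (P {ω | (∃ v ∈ diagD (N : ℤ), OConn (fun e => η e ω) (0, 0) v) ∧
        (xi (fun e => η e ω) {(0, 0)} (N : ℤ)).ncard < M}).toReal < ε := by
  classical
  open St15 in
  have hprob := hfield.1
  have hp1 : p ≤ 1 := by
    have h := hfield.2.2.2 (((0, 0) : V), false)
    have h2 := prob_le_one (μ := P) (s := {ω | η ((0, 0), false) ω = true})
    rw [h] at h2
    exact ENNReal.ofReal_le_one.mp h2
  have hp0 : 0 < p := lt_of_le_of_lt St15.pc_nonneg hp
  rcases lt_or_eq_of_le hp1 with hplt | hpeq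
  · -- p < 1
    set δ : ℝ := (1 - p) ^ (2 * M) with hδ
    have hδpos : 0 < δ := pow_pos (by linarith) _
    set a : ℕ → ℝ := fun N => (P (St15.AE η (N : ℤ))).toReal with ha
    have hsub : ∀ N : ℕ, St15.AE η ((N : ℤ) + 1) ⊆ St15.AE η (N : ℤ) :=
      fun N => St15.AE_antitone η (by positivity)
    have hmono : ∀ N : ℕ, a (N + 1) ≤ a N := by
      intro N
      apply ENNReal.toReal_mono (measure_ne_top P _)
      refine measure_mono ?_
      have h : ((N + 1 : ℕ) : ℤ) = (N : ℤ) + 1 := by push_cast; ring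
      rw [h]
      exact hsub N
    have hbdd : ∀ N, 0 ≤ a N := fun N => ENNReal.toReal_nonneg
    have hL : Tendsto a atTop (𝓝 (⨅ n, a n)) :=
      tendsto_atTop_ciInf (antitone_nat_of_succ_le hmono)
        ⟨0, by rintro x ⟨N, rfl⟩; exact hbdd N⟩
    have hL' : Tendsto (fun N => a (N + 1)) atTop (𝓝 (⨅ n, a n)) :=
      hL.comp (tendsto_add_atTop_nat 1)
    have hdiff : Tendsto (fun N => a N - a (N + 1)) atTop (𝓝 0) := by
      simpa using hL.sub hL'
    have hev : ∀ᶠ N : ℕ in atTop, a N - a (N + 1) < ε * δ :=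
      hdiff.eventually (gt_mem_nhds (by positivity))
    filter_upwards [hev] with N hN
    have hkey := St15.key hfield hp0.le hp1 M (N := (N : ℤ)) (by positivity)
    have hAm : MeasurableSet (St15.AE η ((N : ℤ) + 1)) :=
      St15.AE_meas η hfield.2.1 (by positivity)
    have hdiffeq : P (St15.AE η (N : ℤ) \ St15.AE η ((N : ℤ) + 1))
        = P (St15.AE η (N : ℤ)) - P (St15.AE η ((N : ℤ) + 1)) :=
      measure_diff (hsub N) hAm.nullMeasurableSet (measure_ne_top P _)
    set B := {ω | (∃ v ∈ diagD (N : ℤ), OConn (fun e => η e ω) (0, 0) v) ∧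
        (xi (fun e => η e ω) {(0, 0)} (N : ℤ)).ncard < M} with hB
    have h1 : (ENNReal.ofReal δ * P B).toReal
        ≤ (P (St15.AE η (N : ℤ) \ St15.AE η ((N : ℤ) + 1))).toReal :=
      ENNReal.toReal_mono (measure_ne_top P _) hkey
    rw [ENNReal.toReal_mul, ENNReal.toReal_ofReal hδpos.le, hdiffeq,
      ENNReal.toReal_sub_of_le (measure_mono (hsub N)) (measure_ne_top P _)] at h1
    have hcast : ((N + 1 : ℕ) : ℤ) = (N : ℤ) + 1 := by push_cast; ring
    have h2 : δ * (P B).toReal ≤ a N - a (N + 1) := by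
      rw [ha]
      simp only [hcast]
      exact h1
    have h3 : (P B).toReal ≤ (a N - a (N + 1)) / δ := by
      rw [le_div_iff₀ hδpos]
      linarith
    calc (P B).toReal ≤ (a N - a (N + 1)) / δ := h3
      _ < ε := by rw [div_lt_iff₀ hδpos]; linarith
  · -- p = 1
    filter_upwards [eventually_ge_atTop M] with N hNM
    rw [St15.case_one (hpeq ▸ hfield) M N (by omega)]
    simpa using hε
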